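/- Let μ be a probability measure on ℝ^{dN} × M₁ with ∫ |y| dμ(y,w) < ∞, set W̄ := ∫ (w ⊗ I_d) dμ(y,w) and z := ∫ (w ⊗ I_d) y dμ(y,w), and let α > 0 satisfy α‖𝒥⊥W̄‖ < 1. Define m := (α^{−1} I_{dN} − 𝒥⊥ W̄)^{−1} 𝒥⊥ z and f(x) := (I_{dN} − α 𝒥⊥ W̄)^{−1}(x − m). Then for every x ∈ ℝ^{dN}: f(x) − P_α f(x) = x − m, where P_α f(x) := ∫ f(α 𝒥⊥ (w ⊗ I_d)(x + y)) dμ(y,w). In particular, f solves the Poisson equation id − π(id) = f − P_α f for any invariant probability measure π of P_α with mean m. -/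

import Mathlib

/-!
Averaging over the observation `(y, w)` turns one step of the chain into the affine map
`g x = α (𝒥⊥W̄ x + 𝒥⊥z)`, whose fixed point is `m`; hence `P_α` maps the affine function
`f = B⁻¹(· - m)`, `B = I - α𝒥⊥W̄`, to `B⁻¹(g(·) - m)`, and
`f x - P_α f x = B⁻¹(x - g x) = B⁻¹(B x - α𝒥⊥z) = x - m`.
`B` is invertible by the Neumann series, as `‖α𝒥⊥W̄‖ < 1` in the Euclidean operator norm.
The integrals exist because the entries of `w ⊗ I_d` lie in `[-1, 1]` for row-stochastic `w`
and `y` has a first moment.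
-/

open MeasureTheory ProbabilityTheory Filter Matrix Set
open scoped Kronecker Topology ENNReal NNReal

noncomputable section

namespace DistSA

instance matMS {m n : Type*} : MeasurableSpace (Matrix m n ℝ) := by
  unfold Matrix; infer_instance

/-- The vector space `ℝ^{dN}`, coordinates indexed by pairs `(i, j)` where `i` is the agent. -/
abbrev EVec (N d : ℕ) := Fin N × Fin d → ℝ

/-- Euclidean norm on a finite product of copies of `ℝ`. -/
def enorm {ι : Type*} [Fintype ι] (x : ι → ℝ) : ℝ := Real.sqrt (∑ i, (x i) ^ 2)

/-- Spectral (operator) norm with respect to the Euclidean norm. -/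
def specNorm {ι : Type*} [Fintype ι] (A : Matrix ι ι ℝ) : ℝ :=
  sInf {c | 0 ≤ c ∧ ∀ x : ι → ℝ, enorm (A.mulVec x) ≤ c * enorm x}

/-- Spectral radius of a real matrix: largest modulus of a complex eigenvalue. -/
def specRad {ι : Type*} [Fintype ι] [DecidableEq ι] (A : Matrix ι ι ℝ) : ℝ :=
  sSup ((fun z : ℂ => ‖z‖) '' spectrum ℂ (A.map (algebraMap ℝ ℂ)))

variable (N d : ℕ)

/-- `J = (1/N) 𝟏𝟏ᵀ`, the orthogonal projector onto the span of the all-one vector. -/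
def Jmat : Matrix (Fin N) (Fin N) ℝ := Matrix.of fun _ _ => (N : ℝ)⁻¹

/-- `J⊥ = I_N - J`. -/
def Jperp : Matrix (Fin N) (Fin N) ℝ := 1 - Jmat N

/-- `w ⊗ I_d`, acting on `ℝ^{dN}`. -/
def Kro (w : Matrix (Fin N) (Fin N) ℝ) : Matrix (Fin N × Fin d) (Fin N × Fin d) ℝ :=
  w ⊗ₖ (1 : Matrix (Fin d) (Fin d) ℝ)

/-- `𝒥⊥ = J⊥ ⊗ I_d`. -/
def Jperpb : Matrix (Fin N × Fin d) (Fin N × Fin d) ℝ := Kro N d (Jperp N)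

/-- `𝒥 = J ⊗ I_d`. -/
def Jb : Matrix (Fin N × Fin d) (Fin N × Fin d) ℝ := Kro N d (Jmat N)

/-- `⟨x⟩ = (1/N)(𝟏ᵀ ⊗ I_d) x = (x₁ + ⋯ + x_N)/N`. -/
def avg (x : EVec N d) : Fin d → ℝ := fun j => (N : ℝ)⁻¹ * ∑ i, x (i, j)

/-- `𝟏 ⊗ ϑ`, the consensus vector with common value `ϑ`. -/
def emb (ϑ : Fin d → ℝ) : EVec N d := fun p => ϑ p.2

/-- Row-stochastic matrices: nonnegative entries, rows summing to 1. -/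
def RowStochastic (w : Matrix (Fin N) (Fin N) ℝ) : Prop :=
  (∀ i j, 0 ≤ w i j) ∧ ∀ i, ∑ j, w i j = 1

/-- One step of the normalized-disagreement Markov chain:
`x ↦ α 𝒥⊥ (w ⊗ I_d)(x + y)` for an observation `(y, w)`. -/
def stepFun (α : ℝ) (x : EVec N d) (p : EVec N d × Matrix (Fin N) (Fin N) ℝ) : EVec N d :=
  α • (Jperpb N d).mulVec ((Kro N d p.2).mulVec (x + p.1))

/-- `π` is an invariant probability measure for the kernel `P_α` driven by `μ`:
`π P_α = π`. -/
def IsInvariant (μ : Measure (EVec N d × Matrix (Fin N) (Fin N) ℝ)) (α : ℝ)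
    (π : Measure (EVec N d)) : Prop :=
  ∀ A : Set (EVec N d), MeasurableSet A →
    ∫⁻ x, (Measure.map (stepFun N d α x) μ) A ∂π = π A

/-- The kernel `P_α` acting on vector-valued functions. -/
def kerPV (μ : Measure (EVec N d × Matrix (Fin N) (Fin N) ℝ)) (α : ℝ)
    (f : EVec N d → EVec N d) : EVec N d → EVec N d :=
  fun x => ∫ p, f (stepFun N d α x p) ∂μ

/-- The kernel `P_α` acting on scalar functions. -/
def kerPS (μ : Measure (EVec N d × Matrix (Fin N) (Fin N) ℝ)) (α : ℝ)
    (g : EVec N d → ℝ) : EVec N d → ℝ :=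
  fun x => ∫ p, g (stepFun N d α x p) ∂μ

section EuclideanNorm

variable {ι : Type*} [Fintype ι]

lemma enorm_eq_norm_toLp (x : ι → ℝ) : enorm x = ‖WithLp.toLp 2 x‖ := by
  simp [enorm, EuclideanSpace.norm_eq, sq_abs]

lemma abs_le_enorm (x : ι → ℝ) (i : ι) : |x i| ≤ enorm x := by
  rw [← Real.sqrt_sq_eq_abs]
  exact Real.sqrt_le_sqrt (Finset.single_le_sum (fun j _ => sq_nonneg (x j)) (Finset.mem_univ i))

lemma norm_le_enorm (x : ι → ℝ) : ‖x‖ ≤ enorm x :=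
  pi_norm_le_iff_of_nonneg (Real.sqrt_nonneg _) |>.mpr fun i => abs_le_enorm x i

lemma specNorm_eq_norm_toEuclideanCLM [DecidableEq ι] (A : Matrix ι ι ℝ) :
    specNorm A = ‖Matrix.toEuclideanCLM (𝕜 := ℝ) A‖ := by
  rw [ContinuousLinearMap.norm_def, specNorm]
  congr 1; ext c
  refine and_congr_right fun _ => ⟨fun h x => ?_, fun h x => ?_⟩
  · have hx := h x.ofLp
    rw [enorm_eq_norm_toLp, enorm_eq_norm_toLp, WithLp.toLp_ofLp] at hx
    exact hx
  · simpa [enorm_eq_norm_toLp] using h (WithLp.toLp 2 x)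

lemma isUnit_one_sub_smul_of_mul_specNorm_lt_one [DecidableEq ι] {α : ℝ} (hα : 0 < α)
    {A : Matrix ι ι ℝ} (h : α * specNorm A < 1) : IsUnit (1 - α • A) := by
  rw [← isUnit_map_iff (Matrix.toEuclideanCLM (n := ι) (𝕜 := ℝ)), map_sub, map_one, map_smul]
  refine isUnit_one_sub_of_norm_lt_one ?_
  rwa [norm_smul, Real.norm_of_nonneg hα.le, ← specNorm_eq_norm_toEuclideanCLM]

end EuclideanNorm

lemma inv_mulVec_sub_sub_inv_mulVec_affine {ι : Type*} [Fintype ι] [DecidableEq ι] {α : ℝ}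
    (hα : α ≠ 0) {A : Matrix ι ι ℝ} (hB : IsUnit (1 - α • A)) {v m : ι → ℝ}
    (hm : m = (α⁻¹ • 1 - A)⁻¹ *ᵥ v) (x : ι → ℝ) :
    (1 - α • A)⁻¹ *ᵥ (x - m) - (1 - α • A)⁻¹ *ᵥ (α • (A *ᵥ x + v) - m) = x - m := by
  set B := 1 - α • A
  have hdet : IsUnit B.det := (Matrix.isUnit_iff_isUnit_det B).mp hB
  have hinv : (α⁻¹ • 1 - A)⁻¹ = α • B⁻¹ := by
    refine Matrix.inv_eq_right_inv ?_
    rw [show α⁻¹ • 1 - A = α⁻¹ • B by rw [smul_sub, smul_smul, inv_mul_cancel₀ hα, one_smul],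
      Matrix.smul_mul, Matrix.mul_smul, Matrix.mul_nonsing_inv B hdet, smul_smul,
      inv_mul_cancel₀ hα, one_smul]
  have hBx : x - α • A *ᵥ x = B *ᵥ x := by
    rw [Matrix.sub_mulVec, Matrix.one_mulVec, Matrix.smul_mulVec]
  rw [hm, hinv, ← Matrix.mulVec_sub, Matrix.smul_mulVec, smul_add, sub_sub_sub_cancel_right,
    sub_add_eq_sub_sub, hBx, Matrix.mulVec_sub, Matrix.mulVec_mulVec,
    Matrix.nonsing_inv_mul B hdet, Matrix.one_mulVec, Matrix.mulVec_smul]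

section Integration

variable {Ω : Type*} [MeasurableSpace Ω] {μ : Measure Ω} {ι κ : Type*} [Fintype ι] [Fintype κ]

lemma integrable_of_lintegral_enorm_lt_top {g : Ω → ι → ℝ} (hg : AEStronglyMeasurable g μ)
    (h : ∫⁻ p, ENNReal.ofReal (enorm (g p)) ∂μ < ⊤) : Integrable g μ :=
  ⟨hg, (lintegral_mono fun p => by
    rw [← ofReal_norm]; exact ENNReal.ofReal_le_ofReal (norm_le_enorm _)).trans_lt h⟩

lemma integrable_mulVec_of_ae_abs_le {K : Ω → Matrix ι κ ℝ} {g : Ω → κ → ℝ} {C : ℝ}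
    (hK : ∀ a b, AEStronglyMeasurable (fun p => K p a b) μ)
    (hKC : ∀ᵐ p ∂μ, ∀ a b, |K p a b| ≤ C) (hg : Integrable g μ) :
    Integrable (fun p => K p *ᵥ g p) μ :=
  Integrable.of_eval fun a => integrable_finsetSum _ fun b _ =>
    (hg.eval b).bdd_mul (hK a b) (hKC.mono fun _ hp => (Real.norm_eq_abs _).trans_le (hp a b))

lemma _root_.MeasureTheory.Integrable.const_mulVec (A : Matrix ι κ ℝ) {g : Ω → κ → ℝ}
    (hg : Integrable g μ) : Integrable (fun p => A *ᵥ g p) μ :=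
  (Matrix.mulVecLin A).toContinuousLinearMap.integrable_comp hg

lemma integral_mulVec (A : Matrix ι κ ℝ) {g : Ω → κ → ℝ} (hg : Integrable g μ) :
    ∫ p, A *ᵥ g p ∂μ = A *ᵥ ∫ p, g p ∂μ :=
  (Matrix.mulVecLin A).toContinuousLinearMap.integral_comp_comm hg

lemma integral_mulVec_const {K : Ω → Matrix ι κ ℝ} (hK : ∀ a b, Integrable (fun p => K p a b) μ)
    (x : κ → ℝ) : ∫ p, K p *ᵥ x ∂μ = (Matrix.of fun a b => ∫ p, K p a b ∂μ) *ᵥ x := by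
  have hKx : ∀ a, Integrable (fun p => (K p *ᵥ x) a) μ :=
    fun a => integrable_finsetSum _ fun b _ => (hK a b).mul_const (x b)
  funext a
  rw [eval_integral hKx]
  simp only [Matrix.mulVec, dotProduct, Matrix.of_apply]
  rw [integral_finsetSum _ fun b _ => (hK a b).mul_const (x b)]
  simp only [integral_mul_const]

end Integration

lemma RowStochastic.abs_le_one {N : ℕ} {w : Matrix (Fin N) (Fin N) ℝ} (hw : RowStochastic N w)
    (i j : Fin N) : |w i j| ≤ 1 := by
  rw [abs_of_nonneg (hw.1 i j), ← hw.2 i]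
  exact Finset.single_le_sum (fun k _ => hw.1 i k) (Finset.mem_univ j)

lemma abs_kro_apply_le_one {w : Matrix (Fin N) (Fin N) ℝ} (hw : RowStochastic N w)
    (a b : Fin N × Fin d) : |Kro N d w a b| ≤ 1 := by
  rw [Kro, Matrix.kroneckerMap_apply, abs_mul]
  refine mul_le_one₀ (hw.abs_le_one _ _) (abs_nonneg _) ?_
  rw [Matrix.one_apply]
  split_ifs <;> simp

lemma measurable_kro_apply (a b : Fin N × Fin d) :
    Measurable fun w : Matrix (Fin N) (Fin N) ℝ => Kro N d w a b := by
  simp only [Kro, Matrix.kroneckerMap_apply]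
  exact ((measurable_pi_apply b.1).comp (measurable_pi_apply a.1)).mul_const _

section Kernel

variable {μ : Measure (EVec N d × Matrix (Fin N) (Fin N) ℝ)}

lemma integrable_kro_mulVec (hM1 : ∀ᵐ p ∂μ, RowStochastic N p.2) {g : _ → EVec N d}
    (hg : Integrable g μ) : Integrable (fun p => Kro N d p.2 *ᵥ g p) μ :=
  integrable_mulVec_of_ae_abs_le
    (fun a b => ((measurable_kro_apply N d a b).comp measurable_snd).aestronglyMeasurable)
    (hM1.mono fun _ hp => abs_kro_apply_le_one N d hp) hg

lemma integrable_fst_of_lintegral_enorm_lt_top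
    (hmom1 : ∫⁻ p, ENNReal.ofReal (enorm p.1) ∂μ < ⊤) : Integrable (fun p => p.1) μ :=
  integrable_of_lintegral_enorm_lt_top measurable_fst.aestronglyMeasurable hmom1

variable [IsProbabilityMeasure μ]

lemma integrable_kro_apply (hM1 : ∀ᵐ p ∂μ, RowStochastic N p.2) (a b : Fin N × Fin d) :
    Integrable (fun p => Kro N d p.2 a b) μ :=
  .of_bound ((measurable_kro_apply N d a b).comp measurable_snd).aestronglyMeasurable 1
    (hM1.mono fun _ hp => (Real.norm_eq_abs _).trans_le (abs_kro_apply_le_one N d hp a b))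

lemma kerPV_mulVec_sub (C : Matrix (Fin N × Fin d) (Fin N × Fin d) ℝ) (m : EVec N d) {α : ℝ}
    {x : EVec N d} (h : Integrable (stepFun N d α x) μ) :
    kerPV N d μ α (fun x => C *ᵥ (x - m)) x = C *ᵥ (∫ p, stepFun N d α x p ∂μ - m) := by
  rw [kerPV, integral_mulVec (g := fun p => stepFun N d α x p - m) C (h.sub (integrable_const m)),
    integral_sub h (integrable_const m), integral_const, probReal_univ, one_smul]

variable (hM1 : ∀ᵐ p ∂μ, RowStochastic N p.2) (hmom1 : ∫⁻ p, ENNReal.ofReal (enorm p.1) ∂μ < ⊤)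
include hM1 hmom1

lemma integrable_stepFun (α : ℝ) (x : EVec N d) : Integrable (stepFun N d α x) μ :=
  ((integrable_kro_mulVec N d hM1 ((integrable_const x).add
    (integrable_fst_of_lintegral_enorm_lt_top N d hmom1))).const_mulVec _).smul α

lemma integral_stepFun {Wbar : Matrix (Fin N × Fin d) (Fin N × Fin d) ℝ}
    (hWbar : Wbar = Matrix.of fun a b => ∫ p, Kro N d p.2 a b ∂μ)
    {z : EVec N d} (hz : z = fun a => ∫ p, (Kro N d p.2 *ᵥ p.1) a ∂μ) (α : ℝ) (x : EVec N d) :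
    ∫ p, stepFun N d α x p ∂μ = α • ((Jperpb N d * Wbar) *ᵥ x + Jperpb N d *ᵥ z) := by
  subst hWbar hz
  have hy := integrable_fst_of_lintegral_enorm_lt_top N d hmom1
  have hKx := integrable_kro_mulVec N d hM1 (integrable_const x)
  have hKy := integrable_kro_mulVec N d hM1 hy
  have hKxy : Integrable (fun p => Kro N d p.2 *ᵥ (x + p.1)) μ :=
    integrable_kro_mulVec N d hM1 ((integrable_const x).add hy)
  have hKy_mean : ∫ p, Kro N d p.2 *ᵥ p.1 ∂μ = fun a => ∫ p, (Kro N d p.2 *ᵥ p.1) a ∂μ :=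
    funext (eval_integral hKy.eval)
  simp only [stepFun]
  rw [integral_smul, integral_mulVec _ hKxy]
  simp only [Matrix.mulVec_add]
  rw [integral_add hKx hKy, integral_mulVec_const (integrable_kro_apply N d hM1), hKy_mean,
    Matrix.mulVec_add, Matrix.mulVec_mulVec]

end Kernel

theorem poisson_equation_solution
    (μ : Measure (EVec N d × Matrix (Fin N) (Fin N) ℝ)) [IsProbabilityMeasure μ]
    (hM1 : ∀ᵐ p ∂μ, RowStochastic N p.2)
    (hmom1 : ∫⁻ p, ENNReal.ofReal (enorm p.1) ∂μ < ⊤)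
    (Wbar : Matrix (Fin N × Fin d) (Fin N × Fin d) ℝ)
    (hWbar : Wbar = Matrix.of fun a b => ∫ p, Kro N d p.2 a b ∂μ)
    (z : EVec N d) (hz : z = fun a => ∫ p, (Kro N d p.2).mulVec p.1 a ∂μ)
    (α : ℝ) (hα : 0 < α) (hαW : α * specNorm (Jperpb N d * Wbar) < 1)
    (m : EVec N d)
    (hm : m = (α⁻¹ • (1 : Matrix (Fin N × Fin d) (Fin N × Fin d) ℝ)
        - Jperpb N d * Wbar)⁻¹.mulVec ((Jperpb N d).mulVec z))
    (f : EVec N d → EVec N d)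
    (hf : f = fun x =>
      ((1 : Matrix (Fin N × Fin d) (Fin N × Fin d) ℝ)
          - α • (Jperpb N d * Wbar))⁻¹.mulVec (x - m)) :
    (∀ x : EVec N d, f x - kerPV N d μ α f x = x - m) ∧
      ∀ π : Measure (EVec N d), IsProbabilityMeasure π → IsInvariant N d μ α π →
        (fun a => ∫ x, x a ∂π) = m →
        ∀ x : EVec N d, x - (fun a => ∫ y, y a ∂π) = f x - kerPV N d μ α f x := by
  have key (x : EVec N d) : f x - kerPV N d μ α f x = x - m := by
    rw [hf, kerPV_mulVec_sub N d _ _ (integrable_stepFun N d hM1 hmom1 α x),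
      integral_stepFun N d hM1 hmom1 hWbar hz]
    exact inv_mulVec_sub_sub_inv_mulVec_affine hα.ne'
      (isUnit_one_sub_smul_of_mul_specNorm_lt_one hα hαW) hm x
  exact ⟨key, fun π _ _ hmean x => by rw [hmean, key]⟩

end DistSA
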